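/- Let x, y, z ∈ ℝ² with y ≠ x, |x − y| = |x − z|, and let w = (y + z)/2 be the midpoint of the segment from y to z, with w ≠ x. Let e₁ = (y − x)/|x − y| and e₃ = (w − x)/|x − w|. Then |e₁ − e₃| < |y − z| / |x − y|, provided y ≠ z. -/

import Mathlib

/-!
With `v = w - x` and `c = (y - z) / 2` we have `y - x = v + c`, and the isosceles condition makes
`v ⟂ c`. Splitting `e₁ - e₃ = c / r + (v / r - v / ‖v‖)` with `r = ‖v + c‖` into orthogonal parts,
each part has norm at most `‖c‖ / r` (the second one equals `(r - ‖v‖) / r ≤ ‖c‖ / r`), so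
`‖e₁ - e₃‖ ≤ √2 ‖c‖ / r < 2 ‖c‖ / r = ‖y - z‖ / ‖x - y‖`.
-/

open scoped RealInnerProductSpace

variable {E : Type*} [NormedAddCommGroup E] [InnerProductSpace ℝ E]

lemma norm_inv_smul_sub_inv_norm_smul_le {r : ℝ} (v : E) (hr : 0 < r) (hvr : ‖v‖ ≤ r) :
    ‖r⁻¹ • v - ‖v‖⁻¹ • v‖ ≤ 1 - ‖v‖ / r := by
  rcases eq_or_ne v 0 with rfl | hv
  · simp
  have hv' : 0 < ‖v‖ := norm_pos_iff.mpr hv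
  refine le_of_eq ?_
  calc ‖r⁻¹ • v - ‖v‖⁻¹ • v‖ = |r⁻¹ - ‖v‖⁻¹| * ‖v‖ := by
        rw [← sub_smul, norm_smul, Real.norm_eq_abs]
    _ = 1 - ‖v‖ / r := by
      rw [abs_of_nonpos (sub_nonpos.mpr (inv_anti₀ hv' hvr))]
      field_simp
      ring

lemma norm_normalize_add_orthogonal_sub_normalize_lt {v c : E} (hvc : ⟪v, c⟫ = 0) (hc : c ≠ 0) :
    ‖‖v + c‖⁻¹ • (v + c) - ‖v‖⁻¹ • v‖ < 2 * ‖c‖ / ‖v + c‖ := by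
  set r := ‖v + c‖
  have hpyth : r ^ 2 = ‖v‖ ^ 2 + ‖c‖ ^ 2 := by
    simpa only [sq] using norm_add_sq_eq_norm_sq_add_norm_sq_real hvc
  have hc' : 0 < ‖c‖ := norm_pos_iff.mpr hc
  have hvr : ‖v‖ ≤ r := by nlinarith [norm_nonneg v, norm_nonneg (v + c)]
  have hr : 0 < r := by nlinarith [norm_nonneg v, norm_nonneg (v + c)]
  have hradial : ‖r⁻¹ • v - ‖v‖⁻¹ • v‖ ≤ ‖c‖ / r := by
    refine (norm_inv_smul_sub_inv_norm_smul_le v hr hvr).trans ?_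
    rw [one_sub_div hr.ne', div_le_div_iff_of_pos_right hr]
    linarith [norm_add_le v c]
  have hsplit : r⁻¹ • (v + c) - ‖v‖⁻¹ • v = r⁻¹ • c + (r⁻¹ • v - ‖v‖⁻¹ • v) := by module
  have horth : ⟪r⁻¹ • c, r⁻¹ • v - ‖v‖⁻¹ • v⟫ = 0 := by
    rw [← sub_smul, real_inner_smul_left, real_inner_smul_right, real_inner_comm, hvc]
    ring
  refine lt_of_pow_lt_pow_left₀ 2 (by positivity) ?_
  calc ‖r⁻¹ • (v + c) - ‖v‖⁻¹ • v‖ ^ 2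
      = ‖r⁻¹ • c‖ ^ 2 + ‖r⁻¹ • v - ‖v‖⁻¹ • v‖ ^ 2 := by
        simpa only [hsplit, sq] using norm_add_sq_eq_norm_sq_add_norm_sq_real horth
    _ ≤ (‖c‖ / r) ^ 2 + (‖c‖ / r) ^ 2 := by
        gcongr
        rw [norm_smul, norm_inv, Real.norm_of_nonneg hr.le, inv_mul_eq_div]
    _ < (2 * ‖c‖ / r) ^ 2 := by
        rw [mul_div_assoc]
        nlinarith [div_pos hc' hr]

theorem stmt_5_general (x y z : EuclideanSpace ℝ (Fin 2))
    (hyz : y ≠ z)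
    (hdist : ‖x - y‖ = ‖x - z‖) :
    ‖(‖x - y‖)⁻¹ • (y - x) -
        (‖x - (1/2 : ℝ) • (y + z)‖)⁻¹ • ((1/2 : ℝ) • (y + z) - x)‖ <
      ‖y - z‖ / ‖x - y‖ := by
  set v := (1/2 : ℝ) • (y + z) - x
  set c := (1/2 : ℝ) • (y - z)
  have hyx_eq : y - x = v + c := by module
  have hvc : ⟪v, c⟫ = 0 := by
    have h := (real_inner_add_sub_eq_zero_iff (y - x) (z - x)).mpr
      (by rwa [norm_sub_rev, norm_sub_rev z])
    rw [show v = (1/2 : ℝ) • ((y - x) + (z - x)) by module,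
      show c = (1/2 : ℝ) • ((y - x) - (z - x)) by module,
      real_inner_smul_left, real_inner_smul_right, h]
    ring
  have hc : c ≠ 0 := smul_ne_zero (by norm_num) (sub_ne_zero.mpr hyz)
  have hyz_norm : ‖y - z‖ = 2 * ‖c‖ := by
    rw [norm_smul]; norm_num; ring
  rw [norm_sub_rev x y, norm_sub_rev x, hyx_eq, hyz_norm]
  exact norm_normalize_add_orthogonal_sub_normalize_lt hvc hc

theorem stmt_5 (x y z : EuclideanSpace ℝ (Fin 2))
    (hyx : y ≠ x) (hyz : y ≠ z)
    (hdist : ‖x - y‖ = ‖x - z‖)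
    (hwx : (1/2 : ℝ) • (y + z) ≠ x) :
    ‖(‖x - y‖)⁻¹ • (y - x) -
        (‖x - (1/2 : ℝ) • (y + z)‖)⁻¹ • ((1/2 : ℝ) • (y + z) - x)‖ <
      ‖y - z‖ / ‖x - y‖ :=
  stmt_5_general x y z hyz hdist
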